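/- Let B be a dBUTA, D a vertex-labelled binary DAG, and for a vertex v0 of D let T = unfold_D(v0). For any path π from v0 to v in D, any edge (v, d, v') of D, and any states q, q': there is an edge (π,q) → (π d v', q') in the forest T ⊗ B if and only if ((v,q), d, (v',q')) is an edge of the DAG D ⊗ B. -/
import Mathlib


/-- Vertex-labelled binary trees: leaves labelled `σ0`, internal vertices `σ2`. -/
inductive BTree (σ0 σ2 : Type*) where
  | leaf : σ0 → BTree σ0 σ2
  | node : σ2 → BTree σ0 σ2 → BTree σ0 σ2 → BTree σ0 σ2

/-- Subtree at a position (word over `{ℓ,r}`, `false` = left, `true` = right). -/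
def subtreeAt {σ0 σ2 : Type*} : BTree σ0 σ2 → List Bool → Option (BTree σ0 σ2)
  | t, [] => some t
  | BTree.leaf _, _ :: _ => none
  | BTree.node _ l r, d :: ds => subtreeAt (if d then r else l) ds

open scoped Classical in
/-- The state of the dBUTA `(δ0, δ2)` on a tree sitting at absolute position `p`, where
the selection `S` (a set of absolute leaf positions) marks leaves with `1`. -/
noncomputable def run {σ0 σ2 Q : Type*} (δ0 : σ0 → Bool → Q) (δ2 : Q → Q → σ2 → Q)
    (S : Set (List Bool)) : BTree σ0 σ2 → List Bool → Q
  | BTree.leaf a, p => δ0 a (if p ∈ S then true else false)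
  | BTree.node f l r, p =>
      δ2 (run δ0 δ2 S l (p ++ [false])) (run δ0 δ2 S r (p ++ [true])) f

/-- The leaves of the subtree `T(p)`, as absolute positions of `T`. -/
def LeavesBelow {σ0 σ2 : Type*} (T : BTree σ0 σ2) (p : List Bool) : Set (List Bool) :=
  {w | p <+: w ∧ ∃ a, subtreeAt T w = some (BTree.leaf a)}

/-- `S^a(v,q)`: the nonempty leaf selections `S` of `T(v)` with `B(T(v),S) = q`. -/
def Sa {σ0 σ2 Q : Type*} (δ0 : σ0 → Bool → Q) (δ2 : Q → Q → σ2 → Q)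
    (T : BTree σ0 σ2) (p : List Bool) (q : Q) : Set (Set (List Bool)) :=
  {S | S.Nonempty ∧ S ⊆ LeavesBelow T p ∧
    ∃ t, subtreeAt T p = some t ∧ run δ0 δ2 S t p = q}

/-- `(v,q) ∈ Conf^∅(T)`: the empty selection evaluates to `q` on `T(v)`. -/
def ConfEmpty {σ0 σ2 Q : Type*} (δ0 : σ0 → Bool → Q) (δ2 : Q → Q → σ2 → Q)
    (T : BTree σ0 σ2) (p : List Bool) (q : Q) : Prop :=
  ∃ t, subtreeAt T p = some t ∧ run δ0 δ2 (∅ : Set (List Bool)) t p = q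

/-- `(v,q)` is an active configuration. -/
def ConfA {σ0 σ2 Q : Type*} (δ0 : σ0 → Bool → Q) (δ2 : Q → Q → σ2 → Q)
    (T : BTree σ0 σ2) (p : List Bool) (q : Q) : Prop :=
  (Sa δ0 δ2 T p q).Nonempty

/-- `S^u(v,q)`: the selections in `S^a(v,q)` hitting the leaves of every child of `v`. -/
def Su {σ0 σ2 Q : Type*} (δ0 : σ0 → Bool → Q) (δ2 : Q → Q → σ2 → Q)
    (T : BTree σ0 σ2) (p : List Bool) (q : Q) : Set (Set (List Bool)) :=
  {S | S ∈ Sa δ0 δ2 T p q ∧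
    ∀ d : Bool, (subtreeAt T (p ++ [d])).isSome →
      (S ∩ LeavesBelow T (p ++ [d])).Nonempty}

/-- `(v,q)` is a useful configuration. -/
def ConfU {σ0 σ2 Q : Type*} (δ0 : σ0 → Bool → Q) (δ2 : Q → Q → σ2 → Q)
    (T : BTree σ0 σ2) (p : List Bool) (q : Q) : Prop :=
  (Su δ0 δ2 T p q).Nonempty

/-- The edge relation of the unary-path graph `T ⊗ B` on active configurations:
`(u,p) → (v,q)` if `v` is a child of `u`, the sibling of `v` carries a `Conf^∅`
configuration, and the transition of `B` at `u` yields the state of `(u,p)`. -/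
def TBedge {σ0 σ2 Q : Type*} (δ0 : σ0 → Bool → Q) (δ2 : Q → Q → σ2 → Q)
    (T : BTree σ0 σ2) : (List Bool × Q) → (List Bool × Q) → Prop :=
  fun x y => ∃ (f : σ2) (l r : BTree σ0 σ2) (d : Bool) (q'' : Q),
    subtreeAt T x.1 = some (BTree.node f l r) ∧ y.1 = x.1 ++ [d] ∧
    ConfA δ0 δ2 T x.1 x.2 ∧ ConfA δ0 δ2 T y.1 y.2 ∧
    ConfEmpty δ0 δ2 T (x.1 ++ [!d]) q'' ∧
    (if d then δ2 q'' y.2 f else δ2 y.2 q'' f) = x.2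


/-- Following a direction word through the functional children of a binary DAG. -/
def vtxAt {V : Type*} (l r : V → Option V) : V → List Bool → Option V
  | v, [] => some v
  | v, d :: ds => match (if d then r v else l v) with
    | some w => vtxAt l r w ds
    | none => none

/-- The edge relation of the DAG `D ⊗ B`: `((v,q), d, (v',q'))` is an edge iff `v'` is
the `d`-child of `v`, both configurations are active (for the trees unfolded at `v`,
`v'`), and the sibling child carries a `Conf^∅` state making the transition of `B`
at `v` yield `q`. -/
def DBedge {V σ0 σ2 Q : Type*} (l r : V → Option V) (lab : V → σ0 ⊕ σ2)
    (U : V → BTree σ0 σ2) (δ0 : σ0 → Bool → Q) (δ2 : Q → Q → σ2 → Q)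
    (v : V) (q : Q) (d : Bool) (v' : V) (q' : Q) : Prop :=
  ∃ (f : σ2) (x y : V), lab v = Sum.inr f ∧ l v = some x ∧ r v = some y ∧
    v' = (if d then y else x) ∧
    ConfA δ0 δ2 (U v) [] q ∧ ConfA δ0 δ2 (U v') [] q' ∧
    ∃ q'' : Q, ConfEmpty δ0 δ2 (U (if d then x else y)) [] q'' ∧
      (if d then δ2 q'' q' f else δ2 q' q'' f) = q

lemma subtreeAt_append {σ0 σ2 : Type*} (T : BTree σ0 σ2) (p u : List Bool) :
    subtreeAt T (p ++ u) = (subtreeAt T p).bind (fun t => subtreeAt t u) := by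
  induction p generalizing T with
  | nil => simp [subtreeAt]
  | cons d ds ih =>
    cases T with
    | leaf a => simp [subtreeAt]
    | node f l r => simp [subtreeAt, ih]

lemma subtreeAt_nil {σ0 σ2 : Type*} (t : BTree σ0 σ2) : subtreeAt t [] = some t := by
  cases t <;> rfl

lemma run_shift {σ0 σ2 Q : Type*} (δ0 : σ0 → Bool → Q) (δ2 : Q → Q → σ2 → Q)
    (S : Set (List Bool)) (t : BTree σ0 σ2) (p p' : List Bool) :
    run δ0 δ2 S t (p ++ p') = run δ0 δ2 ((p ++ ·) ⁻¹' S) t p' := by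
  induction t generalizing p' with
  | leaf a => simp [run, Set.preimage]
  | node f tl tr ihl ihr =>
    simp only [run]
    rw [List.append_assoc, List.append_assoc, ihl, ihr]

lemma leavesBelow_shift {σ0 σ2 : Type*} {T t : BTree σ0 σ2} {p : List Bool}
    (hT : subtreeAt T p = some t) :
    LeavesBelow T p = (p ++ ·) '' LeavesBelow t [] := by
  ext w
  constructor
  · rintro ⟨⟨u, rfl⟩, a, ha⟩
    refine ⟨u, ⟨⟨u, rfl⟩, a, ?_⟩, rfl⟩
    rw [subtreeAt_append, hT] at ha
    simpa using ha
  · rintro ⟨u, ⟨-, a, ha⟩, rfl⟩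
    refine ⟨⟨u, rfl⟩, a, ?_⟩
    rw [subtreeAt_append, hT]
    simpa using ha

lemma confA_shift {σ0 σ2 Q : Type*} (δ0 : σ0 → Bool → Q) (δ2 : Q → Q → σ2 → Q)
    {T t : BTree σ0 σ2} {p : List Bool} (hT : subtreeAt T p = some t) (q : Q) :
    ConfA δ0 δ2 T p q ↔ ConfA δ0 δ2 t [] q := by
  constructor
  · rintro ⟨S, hne, hsub, t', ht', hrun⟩
    rw [hT] at ht'; obtain rfl : t = t' := by injection ht'
    refine ⟨(p ++ ·) ⁻¹' S, ?_, ?_, t, subtreeAt_nil t, ?_⟩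
    · obtain ⟨w, hw⟩ := hne
      obtain ⟨u, rfl⟩ := (hsub hw).1
      exact ⟨u, hw⟩
    · intro u hu
      have := hsub hu
      rw [leavesBelow_shift hT] at this
      obtain ⟨u', hu', he⟩ := this
      obtain rfl : u' = u := List.append_cancel_left he
      exact hu'
    · rw [← run_shift]; simpa using hrun
  · rintro ⟨S, hne, hsub, t', ht', hrun⟩
    obtain rfl : t = t' := by rw [subtreeAt_nil] at ht'; injection ht'
    refine ⟨(p ++ ·) '' S, hne.image _, ?_, t, hT, ?_⟩
    · rw [leavesBelow_shift hT]; exact Set.image_mono hsub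
    · have : ((p ++ ·) ⁻¹' ((p ++ ·) '' S)) = S :=
        Set.preimage_image_eq S (fun a b h => List.append_cancel_left h)
      calc run δ0 δ2 ((p ++ ·) '' S) t p
          = run δ0 δ2 ((p ++ ·) '' S) t (p ++ []) := by simp
        _ = run δ0 δ2 ((p ++ ·) ⁻¹' ((p ++ ·) '' S)) t [] := run_shift _ _ _ _ _ _
        _ = q := by rw [this]; simpa using hrun

lemma confEmpty_shift {σ0 σ2 Q : Type*} (δ0 : σ0 → Bool → Q) (δ2 : Q → Q → σ2 → Q)
    {T t : BTree σ0 σ2} {p : List Bool} (hT : subtreeAt T p = some t) (q : Q) :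
    ConfEmpty δ0 δ2 T p q ↔ ConfEmpty δ0 δ2 t [] q := by
  have key : run δ0 δ2 (∅ : Set (List Bool)) t p = run δ0 δ2 ∅ t [] := by
    calc run δ0 δ2 (∅ : Set (List Bool)) t p = run δ0 δ2 ∅ t (p ++ []) := by simp
      _ = run δ0 δ2 ((p ++ ·) ⁻¹' ∅) t [] := run_shift _ _ _ _ _ _
      _ = run δ0 δ2 ∅ t [] := by rw [Set.preimage_empty]
  constructor
  · rintro ⟨t', ht', hrun⟩
    rw [hT] at ht'; obtain rfl : t = t' := by injection ht'
    exact ⟨t, subtreeAt_nil t, by rw [← key]; exact hrun⟩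
  · rintro ⟨t', ht', hrun⟩
    obtain rfl : t = t' := by rw [subtreeAt_nil] at ht'; injection ht'
    exact ⟨t, hT, by rw [key]; exact hrun⟩

lemma vtxAt_subtreeAt {V σ0 σ2 : Type*} (l r : V → Option V) (lab : V → σ0 ⊕ σ2)
    (U : V → BTree σ0 σ2)
    (hleaf : ∀ v a, lab v = Sum.inl a → l v = none ∧ r v = none ∧ U v = BTree.leaf a)
    (hnode : ∀ v f, lab v = Sum.inr f →
      ∃ x y, l v = some x ∧ r v = some y ∧ U v = BTree.node f (U x) (U y))
    (v₀ v : V) (w : List Bool) (hw : vtxAt l r v₀ w = some v) :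
    subtreeAt (U v₀) w = some (U v) := by
  induction w generalizing v₀ with
  | nil => simp only [vtxAt, Option.some.injEq] at hw; subst hw; exact subtreeAt_nil _
  | cons d ds ih =>
    cases hl : lab v₀ with
    | inl a =>
      obtain ⟨h1, h2, h3⟩ := hleaf v₀ a hl
      simp only [vtxAt, h1, h2] at hw
      cases d <;> simp_all
    | inr f =>
      obtain ⟨x, y, hx, hy, hU⟩ := hnode v₀ f hl
      simp only [vtxAt, hx, hy] at hw
      rw [hU]
      simp only [subtreeAt]
      cases d
      · simp only [if_neg Bool.false_ne_true] at hw ⊢; exact ih x hw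
      · simp only [if_pos rfl] at hw ⊢; exact ih y hw

/-- let `T = unfold_D(v₀)` be the unfolding of the binary vertex-labelled
DAG `D` (children `l`, `r`, labels `lab`, with `U v` the unfolding from `v`
characterised by its recursion equations). For any path (direction word) `w` from `v₀`
to `v`, any edge `(v, d, v')` of `D`, and any states `q, q'`: there is an edge
`(w,q) → (w·d, q')` in the forest `T ⊗ B` if and only if `((v,q), d, (v',q'))` is an
edge of the DAG `D ⊗ B`. -/
theorem stmt13 {V σ0 σ2 Q : Type*} (l r : V → Option V) (lab : V → σ0 ⊕ σ2)
    (U : V → BTree σ0 σ2)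
    (hleaf : ∀ v a, lab v = Sum.inl a → l v = none ∧ r v = none ∧ U v = BTree.leaf a)
    (hnode : ∀ v f, lab v = Sum.inr f →
      ∃ x y, l v = some x ∧ r v = some y ∧ U v = BTree.node f (U x) (U y))
    (δ0 : σ0 → Bool → Q) (δ2 : Q → Q → σ2 → Q)
    (v₀ v v' : V) (w : List Bool) (d : Bool)
    (hw : vtxAt l r v₀ w = some v)
    (hd : (if d then r v else l v) = some v')
    (q q' : Q) :
    TBedge δ0 δ2 (U v₀) (w, q) (w ++ [d], q') ↔
      DBedge l r lab U δ0 δ2 v q d v' q' := by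
  have hsub : subtreeAt (U v₀) w = some (U v) :=
    vtxAt_subtreeAt l r lab U hleaf hnode v₀ v w hw
  -- v must be an internal node
  obtain ⟨f, hlab, x, y, hx, hy, hU⟩ :
      ∃ f, lab v = Sum.inr f ∧ ∃ x y, l v = some x ∧ r v = some y ∧
        U v = BTree.node f (U x) (U y) := by
    cases hl : lab v with
    | inl a =>
      obtain ⟨h1, h2, -⟩ := hleaf v a hl
      exfalso; cases d <;> simp_all
    | inr f =>
      obtain ⟨x, y, hx, hy, hU⟩ := hnode v f hl
      exact ⟨f, rfl, x, y, hx, hy, hU⟩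
  have hv' : v' = if d then y else x := by
    cases d <;> simp_all
  have hUif : (if d then U y else U x) = U v' := by
    rw [hv']; cases d <;> simp
  have hUifn : (if d then U x else U y) = U (if d then x else y) := by
    cases d <;> simp
  have hsubd : subtreeAt (U v₀) (w ++ [d]) = some (U v') := by
    rw [subtreeAt_append, hsub, Option.bind_some, hU]
    simpa [subtreeAt] using hUif
  have hsubnd : subtreeAt (U v₀) (w ++ [!d]) = some (U (if d then x else y)) := by
    rw [subtreeAt_append, hsub, Option.bind_some, hU]
    cases d <;> simpa [subtreeAt] using hUifn
  constructor
  · rintro ⟨f', l', r', d', q'', hns, heq, hA1, hA2, hE, htr⟩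
    obtain rfl : d = d' := by
      have := List.append_cancel_left heq
      simpa using this
    rw [hsub] at hns
    obtain ⟨rfl, rfl, rfl⟩ : f = f' ∧ U x = l' ∧ U y = r' := by
      rw [hU] at hns
      injection hns with h
      injection h with h1 h2 h3
      exact ⟨h1, h2, h3⟩
    refine ⟨f, x, y, hlab, hx, hy, hv', ?_, ?_, q'', ?_, ?_⟩
    · exact (confA_shift δ0 δ2 hsub q).mp hA1
    · exact (confA_shift δ0 δ2 hsubd q').mp (by simpa using hA2)
    · exact (confEmpty_shift δ0 δ2 hsubnd q'').mp hE
    · exact htr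
  · rintro ⟨f', x', y', hlab', hx', hy', hv'', hA1, hA2, q'', hE, htr⟩
    obtain rfl : f = f' := by rw [hlab] at hlab'; injection hlab' with h
    obtain rfl : x = x' := by rw [hx] at hx'; injection hx'
    obtain rfl : y = y' := by rw [hy] at hy'; injection hy'
    refine ⟨f, U x, U y, d, q'', by rw [hsub, hU], rfl, ?_, ?_, ?_, ?_⟩
    · exact (confA_shift δ0 δ2 hsub q).mpr hA1
    · exact (confA_shift δ0 δ2 hsubd q').mpr hA2
    · exact (confEmpty_shift δ0 δ2 hsubnd q'').mpr hE
    · exact htr
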